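/- arXiv:math/0410422 — 2 statements merged into one kernel-verified Lean document; each statement's English description precedes it below -/
import Mathlib

section
/- Let {Z_t} be a stationary reversible finite Markov chain on {1,...,n} and f: {1,...,n} → ℝ. Then for every p ∈ (2, ∞) and every t ≥ 1, (E|f(Z_t) - f(Z_0)|^p)^{1/p} ≤ 16 √(pt) (E|f(Z_1) - f(Z_0)|^p)^{1/p}. -/
open Finset Set



private lemma hasDerivAt_sq_rpow {q : ℝ} (hq : 1 ≤ q) (x : ℝ) :
    HasDerivAt (fun y : ℝ => (y ^ 2) ^ q) (q * (x ^ 2) ^ (q - 1) * (2 * x)) x := by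
  have h1 : HasDerivAt (fun y : ℝ => y ^ 2) (2 * x) x := by
    simpa using hasDerivAt_pow 2 x
  have := h1.rpow_const (p := q) (Or.inr hq)
  convert this using 1
  ring

private lemma hasDerivAt_sq_rpow_mul {q : ℝ} (hq : 0 < q) (x : ℝ) :
    HasDerivAt (fun y : ℝ => (y ^ 2) ^ q * y) ((2 * q + 1) * (x ^ 2) ^ q) x := by
  rcases eq_or_ne x 0 with rfl | hx
  · have h0 : (((0:ℝ) ^ 2) : ℝ) ^ q = 0 := by
      rw [show ((0:ℝ)^2) = 0 by norm_num, Real.zero_rpow hq.ne']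
    rw [hasDerivAt_iff_tendsto_slope]
    have hcont : Filter.Tendsto (fun y : ℝ => (y ^ 2) ^ q) (nhds 0)
        (nhds ((2 * q + 1) * ((0:ℝ) ^ 2) ^ q)) := by
      have hc : ContinuousAt (fun y : ℝ => (y ^ 2) ^ q) 0 := by
        refine ContinuousAt.rpow_const ?_ (Or.inr hq.le)
        exact (continuous_pow 2).continuousAt
      have := hc.tendsto
      rw [h0] at this ⊢
      simpa using this
    refine Filter.Tendsto.congr' ?_ (hcont.mono_left nhdsWithin_le_nhds)
    filter_upwards [self_mem_nhdsWithin] with y hy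
    have hy0 : y ≠ 0 := hy
    simp only [slope_def_field]
    rw [h0]
    field_simp
    ring
  · have hx2 : (0:ℝ) < x ^ 2 := by positivity
    have hsq : HasDerivAt (fun y : ℝ => y ^ 2) (2 * x) x := by
      simpa using hasDerivAt_pow 2 x
    have h1 : HasDerivAt (fun y : ℝ => (y ^ 2) ^ q) (2 * x * q * (x ^ 2) ^ (q - 1)) x :=
      hsq.rpow_const (Or.inl hx2.ne')
    have hmul := h1.mul (hasDerivAt_id x)
    have key : (x ^ 2) ^ (q - 1) * x ^ 2 = (x ^ 2) ^ q := by
      rw [← Real.rpow_add_one hx2.ne' (q - 1)]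
      norm_num
    have h3 : 2 * x * q * (x ^ 2) ^ (q - 1) * id x + (x ^ 2) ^ q * 1
        = (2 * q + 1) * (x ^ 2) ^ q := by
      simp only [id_eq, mul_one]
      have : 2 * x * q * (x ^ 2) ^ (q - 1) * x = 2 * q * ((x ^ 2) ^ (q - 1) * x ^ 2) := by ring
      rw [this, key]; ring
    rw [h3] at hmul
    exact hmul

private lemma lp_smooth {ι : Type*} [Fintype ι] (w u v : ι → ℝ) (hw : ∀ i, 0 ≤ w i)
    {p : ℝ} (hp : 2 < p)
    (horth : ∑ i, w i * ((u i ^ 2) ^ ((p - 2) / 2) * u i * v i) = 0) :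
    (∑ i, w i * ((u i + v i) ^ 2) ^ (p / 2)) ^ (2 / p) ≤
      (∑ i, w i * (u i ^ 2) ^ (p / 2)) ^ (2 / p)
        + (p - 1) * (∑ i, w i * (v i ^ 2) ^ (p / 2)) ^ (2 / p) := by
  have hp0 : (0:ℝ) < p := by linarith
  have hpne : p ≠ 0 := ne_of_gt hp0
  have hp2 : p - 2 ≠ 0 := by linarith
  have hq2 : (0:ℝ) < (p - 2) / 2 := by linarith
  have hterm : ∀ (x : ι → ℝ) (i : ι), 0 ≤ w i * (x i ^ 2) ^ (p / 2) := fun x i =>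
    mul_nonneg (hw i) (Real.rpow_nonneg (sq_nonneg _) _)
  set Y := ∑ i, w i * (u i ^ 2) ^ (p / 2) with hYdef
  set Z := ∑ i, w i * (v i ^ 2) ^ (p / 2) with hZdef
  have hY0 : 0 ≤ Y := sum_nonneg fun i _ => hterm u i
  have hZ0 : 0 ≤ Z := sum_nonneg fun i _ => hterm v i
  have hvan : ∀ (x : ι → ℝ), (∑ i, w i * (x i ^ 2) ^ (p / 2)) = 0 →
      ∀ i, w i ≠ 0 → x i = 0 := by
    intro x hx i hi
    have := (sum_eq_zero_iff_of_nonneg (fun i _ => hterm x i)).1 hx i (mem_univ i)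
    rcases mul_eq_zero.1 this with h | h
    · exact absurd h hi
    · have h2 : x i ^ 2 = 0 := by
        have h3 : (0:ℝ) ≤ x i ^ 2 := sq_nonneg _
        exact ((Real.rpow_eq_zero_iff_of_nonneg h3).1 h).1
      exact (pow_eq_zero_iff (by norm_num : 2 ≠ 0)).1 h2
  rcases eq_or_lt_of_le hZ0 with hZz | hZpos
  · have hsame : (∑ i, w i * ((u i + v i) ^ 2) ^ (p / 2)) = Y := by
      refine sum_congr rfl fun i _ => ?_
      rcases eq_or_ne (w i) 0 with h | h
      · rw [h]; ring
      · rw [hvan v hZz.symm i h, add_zero]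
    rw [hsame, ← hZz]
    have : ((0:ℝ)) ^ (2 / p) = 0 := Real.zero_rpow (by positivity)
    rw [this, mul_zero, add_zero]
  rcases eq_or_lt_of_le hY0 with hYz | hYpos
  · have hsame : (∑ i, w i * ((u i + v i) ^ 2) ^ (p / 2)) = Z := by
      refine sum_congr rfl fun i _ => ?_
      rcases eq_or_ne (w i) 0 with h | h
      · rw [h]; ring
      · rw [hvan u hYz.symm i h, zero_add]
    rw [hsame, ← hYz]
    have h1 : ((0:ℝ)) ^ (2 / p) = 0 := Real.zero_rpow (by positivity)
    rw [h1, zero_add]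
    have : (0:ℝ) ≤ Z ^ (2 / p) := Real.rpow_nonneg hZ0 _
    nlinarith
  -- main case
  set F : ℝ → ℝ := fun θ => ∑ i, w i * ((u i + θ * v i) ^ 2) ^ (p / 2) with hFdef
  set F₁ : ℝ → ℝ := fun θ => ∑ i,
      (w i * p * v i) * (((u i + θ * v i) ^ 2) ^ ((p - 2) / 2) * (u i + θ * v i)) with hF₁def
  set F₂ : ℝ → ℝ := fun θ => ∑ i,
      (w i * p * v i) * ((p - 1) * ((u i + θ * v i) ^ 2) ^ ((p - 2) / 2) * v i) with hF₂def
  have haff : ∀ (i : ι) (θ : ℝ), HasDerivAt (fun θ : ℝ => u i + θ * v i) (v i) θ := by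
    intro i θ
    simpa using ((hasDerivAt_id θ).mul_const (v i)).const_add (u i)
  have hFd : ∀ θ, HasDerivAt F (F₁ θ) θ := by
    intro θ
    rw [hFdef, hF₁def]
    refine HasDerivAt.fun_sum fun i _ => ?_
    have hcomp := (hasDerivAt_sq_rpow (q := p / 2) (by linarith) (u i + θ * v i)).comp
        θ (haff i θ)
    have := hcomp.const_mul (w i)
    convert this using 1
    · rfl
    · rfl
    rw [show p / 2 - 1 = (p - 2) / 2 by ring]
    try ring
  have hF₁d : ∀ θ, HasDerivAt F₁ (F₂ θ) θ := by
    intro θ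
    rw [hF₁def, hF₂def]
    refine HasDerivAt.fun_sum fun i _ => ?_
    have hcomp := (hasDerivAt_sq_rpow_mul (q := (p - 2) / 2) hq2 (u i + θ * v i)).comp
        θ (haff i θ)
    have := hcomp.const_mul (w i * p * v i)
    convert this using 1
    · rfl
    · rfl
    rw [show 2 * ((p - 2) / 2) + 1 = p - 1 by ring]
    try ring
  have hF0 : F 0 = Y := by
    rw [hFdef, hYdef]
    refine sum_congr rfl fun i _ => by norm_num
  have hF₁0 : F₁ 0 = 0 := by
    simp only [hF₁def]
    have h1 : ∀ i : ι, (w i * p * v i) * (((u i + 0 * v i) ^ 2) ^ ((p - 2) / 2) * (u i + 0 * v i))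
        = p * (w i * ((u i ^ 2) ^ ((p - 2) / 2) * u i * v i)) := by
      intro i; norm_num; ring
    rw [sum_congr rfl fun i _ => h1 i, ← mul_sum, horth, mul_zero]
  have hFnn : ∀ θ, 0 ≤ F θ := fun θ => sum_nonneg fun i _ =>
    mul_nonneg (hw i) (Real.rpow_nonneg (sq_nonneg _) _)
  have hFpos : ∀ θ ∈ Icc (0:ℝ) 1, 0 < F θ := by
    intro θ hθ
    rcases eq_or_lt_of_le (hFnn θ) with h0 | h; swap
    · exact h
    exfalso
    have hsup : ∀ i, w i ≠ 0 → u i + θ * v i = 0 := hvan _ h0.symm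
    have horth' : ∑ i, w i * ((u i ^ 2) ^ ((p - 2) / 2) * u i * v i)
        = -(θ * (θ ^ 2) ^ ((p - 2) / 2) * Z) := by
      rw [hZdef, ← neg_mul, mul_sum]
      refine sum_congr rfl fun i _ => ?_
      rcases eq_or_ne (w i) 0 with h | h
      · rw [h]; ring
      · have hu : u i = -(θ * v i) := by have := hsup i h; linarith
        rw [hu]
        have h1 : (-(θ * v i)) ^ 2 = θ ^ 2 * v i ^ 2 := by ring
        rw [h1, Real.mul_rpow (sq_nonneg θ) (sq_nonneg (v i))]
        have h2 : (v i ^ 2) ^ ((p - 2) / 2) * v i ^ 2 = (v i ^ 2) ^ (p / 2) := by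
          nth_rewrite 2 [show (v i ^ 2) = (v i ^ 2) ^ (1:ℝ) by rw [Real.rpow_one]]
          rw [← Real.rpow_add_of_nonneg (sq_nonneg _) (by linarith) (by norm_num)]
          rw [show (p - 2) / 2 + 1 = p / 2 by ring]
        calc w i * ((θ ^ 2) ^ ((p - 2) / 2) * (v i ^ 2) ^ ((p - 2) / 2) * -(θ * v i) * v i)
            = -(θ * (θ ^ 2) ^ ((p - 2) / 2)) * (w i * ((v i ^ 2) ^ ((p - 2) / 2) * v i ^ 2)) := by
              ring
          _ = -(θ * (θ ^ 2) ^ ((p - 2) / 2)) * (w i * (v i ^ 2) ^ (p / 2)) := by rw [h2]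
    rw [horth] at horth'
    have hθ0 : θ ≠ 0 := by
      intro h
      rw [h] at h0
      rw [hF0] at h0
      linarith
    have hθpos : 0 < θ := lt_of_le_of_ne hθ.1 (Ne.symm hθ0)
    have : 0 < θ * (θ ^ 2) ^ ((p - 2) / 2) * Z :=
      mul_pos (mul_pos hθpos (Real.rpow_pos_of_pos (by positivity) _)) hZpos
    linarith
  -- Hölder
  have hconj : Real.HolderConjugate (p / (p - 2)) (p / 2) := by
    rw [Real.holderConjugate_iff]
    constructor
    · rw [lt_div_iff₀ (by linarith)]; linarith
    · field_simp
      ring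
  have hS : ∀ θ, (∑ i, w i * (((u i + θ * v i) ^ 2) ^ ((p - 2) / 2) * v i ^ 2))
      ≤ F θ ^ ((p - 2) / p) * Z ^ (2 / p) := by
    intro θ
    have h := Real.inner_le_Lp_mul_Lq_of_nonneg univ hconj
      (f := fun i => w i ^ ((p - 2) / p) * ((u i + θ * v i) ^ 2) ^ ((p - 2) / 2))
      (g := fun i => w i ^ (2 / p) * v i ^ 2)
      (fun i _ => mul_nonneg (Real.rpow_nonneg (hw i) _) (Real.rpow_nonneg (sq_nonneg _) _))
      (fun i _ => mul_nonneg (Real.rpow_nonneg (hw i) _) (sq_nonneg _))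
    have hfg : ∀ i : ι, (w i ^ ((p - 2) / p) * ((u i + θ * v i) ^ 2) ^ ((p - 2) / 2))
        * (w i ^ (2 / p) * v i ^ 2)
        = w i * (((u i + θ * v i) ^ 2) ^ ((p - 2) / 2) * v i ^ 2) := by
      intro i
      have hww : w i ^ ((p - 2) / p) * w i ^ (2 / p) = w i := by
        rw [← Real.rpow_add_of_nonneg (hw i) (div_nonneg (by linarith) hp0.le) (by positivity)]
        rw [show (p - 2) / p + 2 / p = 1 by field_simp; ring]
        exact Real.rpow_one _
      calc (w i ^ ((p - 2) / p) * ((u i + θ * v i) ^ 2) ^ ((p - 2) / 2))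
            * (w i ^ (2 / p) * v i ^ 2)
          = (w i ^ ((p - 2) / p) * w i ^ (2 / p)) *
              (((u i + θ * v i) ^ 2) ^ ((p - 2) / 2) * v i ^ 2) := by ring
        _ = _ := by rw [hww]
    have hfp : ∀ i : ι, (w i ^ ((p - 2) / p) * ((u i + θ * v i) ^ 2) ^ ((p - 2) / 2))
        ^ (p / (p - 2)) = w i * ((u i + θ * v i) ^ 2) ^ (p / 2) := by
      intro i
      rw [Real.mul_rpow (Real.rpow_nonneg (hw i) _) (Real.rpow_nonneg (sq_nonneg _) _),
        ← Real.rpow_mul (hw i), ← Real.rpow_mul (sq_nonneg _)]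
      rw [show (p - 2) / p * (p / (p - 2)) = 1 by field_simp [hpne, hp2],
        show (p - 2) / 2 * (p / (p - 2)) = p / 2 by field_simp [hp2], Real.rpow_one]
    have hgp : ∀ i : ι, (w i ^ (2 / p) * v i ^ 2) ^ (p / 2)
        = w i * (v i ^ 2) ^ (p / 2) := by
      intro i
      rw [Real.mul_rpow (Real.rpow_nonneg (hw i) _) (sq_nonneg _),
        ← Real.rpow_mul (hw i)]
      rw [show 2 / p * (p / 2) = 1 by field_simp, Real.rpow_one]
    rw [sum_congr rfl fun i _ => hfg i] at h
    rw [sum_congr rfl fun i _ => hfp i] at h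
    rw [sum_congr rfl fun i _ => hgp i] at h
    rw [show 1 / (p / (p - 2)) = (p - 2) / p by field_simp,
      show 1 / (p / 2) = 2 / p by field_simp] at h
    exact h
  -- second derivative bound
  set C := (p - 1) * Z ^ (2 / p) with hCdef
  have hZ2 : 0 ≤ Z ^ (2 / p) := Real.rpow_nonneg hZ0 _
  have hC0 : 0 ≤ C := mul_nonneg (by linarith) hZ2
  set G₂ : ℝ → ℝ := fun θ => 2 / p * (((2 / p - 1) * F θ ^ (2 / p - 1 - 1) * F₁ θ) * F₁ θ
      + F θ ^ (2 / p - 1) * F₂ θ) with hG₂def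
  have hg : ∀ θ ∈ Icc (0:ℝ) 1,
      HasDerivAt (fun θ => F θ ^ (2 / p)) (2 / p * F θ ^ (2 / p - 1) * F₁ θ) θ := by
    intro θ hθ
    have := (hFd θ).rpow_const (p := 2 / p) (Or.inl (hFpos θ hθ).ne')
    convert this using 1; ring
  have hg₁ : ∀ θ ∈ Icc (0:ℝ) 1,
      HasDerivAt (fun θ => 2 / p * F θ ^ (2 / p - 1) * F₁ θ) (G₂ θ) θ := by
    intro θ hθ
    have hA : HasDerivAt (fun θ => F θ ^ (2 / p - 1))
        ((2 / p - 1) * F θ ^ (2 / p - 1 - 1) * F₁ θ) θ := by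
      have := (hFd θ).rpow_const (p := 2 / p - 1) (Or.inl (hFpos θ hθ).ne')
      convert this using 1; ring
    have := (hA.mul (hF₁d θ)).const_mul (2 / p)
    rw [hG₂def]
    simpa [mul_assoc] using this
  have hG₂le : ∀ θ ∈ Icc (0:ℝ) 1, G₂ θ ≤ 2 * C := by
    intro θ hθ
    rw [hG₂def, hCdef]
    have hF2bound : F₂ θ ≤ p * (p - 1) * (F θ ^ ((p - 2) / p) * Z ^ (2 / p)) := by
      have h1 : F₂ θ = p * (p - 1) *
          ∑ i, w i * (((u i + θ * v i) ^ 2) ^ ((p - 2) / 2) * v i ^ 2) := by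
        rw [hF₂def, mul_sum]; exact sum_congr rfl fun i _ => by ring
      rw [h1]
      exact mul_le_mul_of_nonneg_left (hS θ) (by nlinarith)
    have hFpow_pos : (0:ℝ) < F θ ^ (2 / p - 1) := Real.rpow_pos_of_pos (hFpos θ hθ) _
    have hkey : F θ ^ (2 / p - 1) * F θ ^ ((p - 2) / p) = 1 := by
      rw [← Real.rpow_add (hFpos θ hθ), show 2 / p - 1 + (p - 2) / p = 0 by field_simp; ring,
        Real.rpow_zero]
    have hT1 : ((2 / p - 1) * F θ ^ (2 / p - 1 - 1) * F₁ θ) * F₁ θ ≤ 0 := by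
      have h1 : (0:ℝ) < F θ ^ (2 / p - 1 - 1) := Real.rpow_pos_of_pos (hFpos θ hθ) _
      have h2 : 2 / p - 1 < 0 := by
        have : 2 / p < 1 := by rw [div_lt_one hp0]; linarith
        linarith
      have heq : ((2 / p - 1) * F θ ^ (2 / p - 1 - 1) * F₁ θ) * F₁ θ
          = (2 / p - 1) * (F θ ^ (2 / p - 1 - 1) * (F₁ θ * F₁ θ)) := by ring
      rw [heq]
      exact mul_nonpos_iff.2 (Or.inr ⟨h2.le, mul_nonneg h1.le (mul_self_nonneg _)⟩)
    have hT2 : F θ ^ (2 / p - 1) * F₂ θ ≤ p * (p - 1) * Z ^ (2 / p) := by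
      calc F θ ^ (2 / p - 1) * F₂ θ
          ≤ F θ ^ (2 / p - 1) * (p * (p - 1) * (F θ ^ ((p - 2) / p) * Z ^ (2 / p))) :=
            mul_le_mul_of_nonneg_left hF2bound hFpow_pos.le
        _ = p * (p - 1) * Z ^ (2 / p) * (F θ ^ (2 / p - 1) * F θ ^ ((p - 2) / p)) := by ring
        _ = p * (p - 1) * Z ^ (2 / p) := by rw [hkey, mul_one]
    have h2p : (0:ℝ) < 2 / p := by positivity
    calc 2 / p * (((2 / p - 1) * F θ ^ (2 / p - 1 - 1) * F₁ θ) * F₁ θ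
            + F θ ^ (2 / p - 1) * F₂ θ)
        ≤ 2 / p * (0 + p * (p - 1) * Z ^ (2 / p)) := by
          apply mul_le_mul_of_nonneg_left _ h2p.le
          linarith
      _ = 2 * ((p - 1) * Z ^ (2 / p)) := by field_simp; ring
  -- first MVT: bound the first derivative
  have hg₁0 : 2 / p * F 0 ^ (2 / p - 1) * F₁ 0 = 0 := by rw [hF₁0, mul_zero]
  have hg₁le : ∀ θ ∈ Ioo (0:ℝ) 1, 2 / p * F θ ^ (2 / p - 1) * F₁ θ ≤ 2 * C * θ := by
    intro θ hθ
    have hsub : Icc (0:ℝ) θ ⊆ Icc 0 1 := Icc_subset_Icc le_rfl hθ.2.le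
    obtain ⟨c, hc, hceq⟩ := exists_hasDerivAt_eq_slope
      (fun θ => 2 / p * F θ ^ (2 / p - 1) * F₁ θ) G₂ hθ.1
      (fun x hx => ((hg₁ x (hsub hx)).continuousAt).continuousWithinAt)
      (fun x hx => hg₁ x (hsub (Ioo_subset_Icc_self hx)))
    have hcmem : c ∈ Icc (0:ℝ) 1 := ⟨hc.1.le, hc.2.le.trans hθ.2.le⟩
    have hle := hG₂le c hcmem
    rw [hceq] at hle
    simp only [hg₁0, sub_zero] at hle
    rw [div_le_iff₀ (by simpa using hθ.1)] at hle
    nlinarith [hθ.1, hC0]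
  -- second MVT
  have hq2' : ∀ x : ℝ, HasDerivAt (fun y : ℝ => C * y ^ 2) (C * (2 * x)) x := by
    intro x
    simpa using (hasDerivAt_pow 2 x).const_mul C
  obtain ⟨c, hc, hceq⟩ := exists_hasDerivAt_eq_slope
    (fun θ => F θ ^ (2 / p) - C * θ ^ 2)
    (fun θ => 2 / p * F θ ^ (2 / p - 1) * F₁ θ - C * (2 * θ)) one_pos
    (fun x hx => (((hg x hx).sub (hq2' x)).continuousAt).continuousWithinAt)
    (fun x hx => (hg x (Ioo_subset_Icc_self hx)).sub (hq2' x))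
  have hle : 2 / p * F c ^ (2 / p - 1) * F₁ c - C * (2 * c) ≤ 0 := by
    have := hg₁le c hc
    linarith
  rw [hceq] at hle
  norm_num at hle
  have hF1 : F 1 = ∑ i, w i * ((u i + v i) ^ 2) ^ (p / 2) := by
    rw [hFdef]
    exact sum_congr rfl fun i _ => by norm_num
  rw [hF1, hF0] at hle
  rw [hCdef] at hle
  linarith


section PathSpace

variable {n : ℕ} {π : Fin n → ℝ} {A : Matrix (Fin n) (Fin n) ℝ}

private def pmu (n : ℕ) (π : Fin n → ℝ) (A : Matrix (Fin n) (Fin n) ℝ) (k : ℕ)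
    (ω : Fin (k + 1) → Fin n) : ℝ :=
  π (ω 0) * ∏ i : Fin k, A (ω i.castSucc) (ω i.succ)

private def pexp (n : ℕ) (π : Fin n → ℝ) (A : Matrix (Fin n) (Fin n) ℝ) (k : ℕ)
    (g : (Fin (k + 1) → Fin n) → ℝ) : ℝ :=
  ∑ ω : Fin (k + 1) → Fin n, pmu n π A k ω * g ω

private lemma pmu_nonneg (hπ0 : ∀ i, 0 ≤ π i) (hA0 : ∀ i j, 0 ≤ A i j) (k : ℕ)
    (ω : Fin (k + 1) → Fin n) : 0 ≤ pmu n π A k ω :=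
  mul_nonneg (hπ0 _) (prod_nonneg fun i _ => hA0 _ _)

private def snocEquiv (n m : ℕ) : ((Fin m → Fin n) × Fin n) ≃ (Fin (m + 1) → Fin n) where
  toFun x := Fin.snoc x.1 x.2
  invFun ω := (Fin.init ω, ω (Fin.last m))
  left_inv x := by simp
  right_inv ω := by simp

private lemma sum_snoc {m : ℕ} (h : (Fin (m + 1) → Fin n) → ℝ) :
    ∑ ω : Fin (m + 1) → Fin n, h ω
      = ∑ σ : Fin m → Fin n, ∑ j : Fin n, h (Fin.snoc σ j) := by
  calc ∑ ω : Fin (m + 1) → Fin n, h ω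
      = ∑ x : (Fin m → Fin n) × Fin n, h (Fin.snoc x.1 x.2) :=
        (Fintype.sum_bijective (snocEquiv n m) (snocEquiv n m).bijective
          (fun x => h (Fin.snoc x.1 x.2)) h (fun x => rfl)).symm
    _ = ∑ σ : Fin m → Fin n, ∑ j : Fin n, h (Fin.snoc σ j) := Fintype.sum_prod_type _

private lemma snoc_apply_zero {m : ℕ} (σ : Fin (m + 1) → Fin n) (j : Fin n) :
    (Fin.snoc σ j : Fin (m + 2) → Fin n) 0 = σ 0 := by
  simpa using Fin.snoc_castSucc (α := fun _ => Fin n) j σ 0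

private lemma pmu_snoc (k : ℕ) (σ : Fin (k + 1) → Fin n) (j : Fin n) :
    pmu n π A (k + 1) (Fin.snoc σ j) = pmu n π A k σ * A (σ (Fin.last k)) j := by
  unfold pmu
  rw [Fin.prod_univ_castSucc (f := fun i : Fin (k + 1) =>
    A ((Fin.snoc σ j : Fin (k+2) → Fin n) i.castSucc) ((Fin.snoc σ j : Fin (k+2) → Fin n) i.succ))]
  simp only [Fin.succ_castSucc, Fin.snoc_castSucc, Fin.succ_last, Fin.snoc_last, snoc_apply_zero]
  ring

private lemma pexp_succ (k : ℕ) (g : (Fin (k + 2) → Fin n) → ℝ) :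
    pexp n π A (k + 1) g
      = pexp n π A k (fun σ => ∑ j, A (σ (Fin.last k)) j * g (Fin.snoc σ j)) := by
  unfold pexp
  rw [sum_snoc]
  refine sum_congr rfl fun σ _ => ?_
  rw [mul_sum]
  refine sum_congr rfl fun j _ => ?_
  rw [pmu_snoc]
  ring

private lemma pexp_init (k : ℕ) (hA1 : ∀ i, ∑ j, A i j = 1) (g : (Fin (k + 1) → Fin n) → ℝ) :
    pexp n π A (k + 1) (fun ω => g (Fin.init ω)) = pexp n π A k g := by
  rw [pexp_succ]
  unfold pexp
  refine sum_congr rfl fun σ _ => ?_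
  simp only [Fin.init_snoc]
  rw [← Finset.sum_mul, hA1, one_mul]

private lemma pexp_zero (G : Fin n → ℝ) :
    pexp n π A 0 (fun ω => G (ω 0)) = ∑ i, π i * G i := by
  unfold pexp pmu
  rw [← Equiv.sum_comp ((Equiv.funUnique (Fin 1) (Fin n)).symm)]
  simp

private lemma pexp_eval_zero (k : ℕ) (hA1 : ∀ i, ∑ j, A i j = 1) (G : Fin n → ℝ) :
    pexp n π A k (fun ω => G (ω 0)) = ∑ i, π i * G i := by
  induction k with
  | zero => exact pexp_zero G
  | succ k ih =>
    have h : (fun ω : Fin (k + 2) → Fin n => G (ω 0))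
        = fun ω => (fun σ : Fin (k + 1) → Fin n => G (σ 0)) (Fin.init ω) := by
      funext ω; simp [Fin.init]
    rw [h, pexp_init k hA1 (fun σ : Fin (k + 1) → Fin n => G (σ 0)), ih]

private lemma pexp_eval_last (k : ℕ) (hstat : ∀ j, ∑ i, π i * A i j = π j) :
    ∀ (G : Fin n → ℝ), pexp n π A k (fun ω => G (ω (Fin.last k))) = ∑ i, π i * G i := by
  induction k with
  | zero =>
    intro G
    have h : Fin.last 0 = (0 : Fin 1) := rfl
    rw [h]
    exact pexp_zero G
  | succ k ih =>
    intro G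
    rw [pexp_succ]
    have h : (fun σ : Fin (k + 1) → Fin n =>
          ∑ j, A (σ (Fin.last k)) j * G ((Fin.snoc σ j : Fin (k + 2) → Fin n) (Fin.last (k + 1))))
        = fun σ => (fun i => ∑ j, A i j * G j) (σ (Fin.last k)) := by
      funext σ; simp [Fin.snoc_last]
    rw [h, ih (fun i => ∑ j, A i j * G j)]
    calc ∑ i, π i * ∑ j, A i j * G j
        = ∑ i, ∑ j, π i * A i j * G j := by
          refine sum_congr rfl fun i _ => ?_
          rw [mul_sum]; exact sum_congr rfl fun j _ => by ring
      _ = ∑ j, ∑ i, π i * A i j * G j := sum_comm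
      _ = ∑ j, π j * G j := by
          refine sum_congr rfl fun j _ => ?_
          rw [← Finset.sum_mul, hstat j]

private lemma pexp_toppair (k : ℕ) (hstat : ∀ j, ∑ i, π i * A i j = π j)
    (G : Fin n → Fin n → ℝ) :
    pexp n π A (k + 1) (fun ω => G (ω (Fin.last k).castSucc) (ω (Fin.last (k + 1))))
      = ∑ i, ∑ j, π i * A i j * G i j := by
  rw [pexp_succ]
  have h : (fun σ : Fin (k + 1) → Fin n => ∑ j, A (σ (Fin.last k)) j *
        G ((Fin.snoc σ j : Fin (k + 2) → Fin n) (Fin.last k).castSucc) ((Fin.snoc σ j : Fin (k + 2) → Fin n) (Fin.last (k + 1))))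
      = fun σ => (fun i => ∑ j, A i j * G i j) (σ (Fin.last k)) := by
    funext σ; simp [Fin.snoc_castSucc, Fin.snoc_last]
  rw [h, pexp_eval_last k hstat (fun i => ∑ j, A i j * G i j)]
  refine sum_congr rfl fun i _ => ?_
  rw [mul_sum]; exact sum_congr rfl fun j _ => by ring

private lemma pexp_zero_last (k : ℕ) :
    ∀ (G : Fin n → Fin n → ℝ),
      pexp n π A k (fun ω => G (ω 0) (ω (Fin.last k)))
        = ∑ i, ∑ j, π i * (A ^ k) i j * G i j := by
  induction k with
  | zero =>
    intro G
    have h : (fun ω : Fin 1 → Fin n => G (ω 0) (ω (Fin.last 0)))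
        = fun ω => (fun i => G i i) (ω 0) := rfl
    rw [h, pexp_zero (fun i => G i i)]
    simp [Matrix.one_apply]
  | succ k ih =>
    intro G
    rw [pexp_succ]
    have h : (fun σ : Fin (k + 1) → Fin n => ∑ j, A (σ (Fin.last k)) j *
          G ((Fin.snoc σ j : Fin (k + 2) → Fin n) 0) ((Fin.snoc σ j : Fin (k + 2) → Fin n) (Fin.last (k + 1))))
        = fun σ => (fun a b => ∑ j, A b j * G a j) (σ 0) (σ (Fin.last k)) := by
      funext σ; simp [Fin.snoc_last, snoc_apply_zero]
    rw [h, ih (fun a b => ∑ j, A b j * G a j)]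
    refine sum_congr rfl fun i _ => ?_
    rw [pow_succ]
    calc ∑ m, π i * (A ^ k) i m * ∑ j, A m j * G i j
        = ∑ m, ∑ j, π i * ((A ^ k) i m * A m j) * G i j := by
          refine sum_congr rfl fun m _ => ?_
          rw [mul_sum]; exact sum_congr rfl fun j _ => by ring
      _ = ∑ j, ∑ m, π i * ((A ^ k) i m * A m j) * G i j := sum_comm
      _ = ∑ j, π i * (A ^ k * A) i j * G i j := by
          refine sum_congr rfl fun j _ => ?_
          rw [Matrix.mul_apply, ← Finset.sum_mul, ← mul_sum]

private lemma rev_prod (hrev : ∀ i j, π i * A i j = π j * A j i) :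
    ∀ (k : ℕ) (σ : Fin (k + 1) → Fin n),
      π (σ (Fin.last k)) * ∏ i : Fin k, A (σ i.succ) (σ i.castSucc)
        = π (σ 0) * ∏ i : Fin k, A (σ i.castSucc) (σ i.succ) := by
  intro k
  induction k with
  | zero => intro σ; simp
  | succ k ih =>
    intro σ
    rw [Fin.prod_univ_castSucc (f := fun i : Fin (k + 1) => A (σ i.succ) (σ i.castSucc)),
      Fin.prod_univ_castSucc (f := fun i : Fin (k + 1) => A (σ i.castSucc) (σ i.succ))]
    simp only [Fin.succ_castSucc, Fin.succ_last]
    have hIH := ih (fun j => σ j.castSucc)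
    simp only [Fin.castSucc_zero] at hIH
    have hswap := hrev (σ (Fin.last (k + 1))) (σ (Fin.last k).castSucc)
    set P := ∏ i : Fin k, A (σ i.succ.castSucc) (σ i.castSucc.castSucc) with hP
    set Q := ∏ i : Fin k, A (σ i.castSucc.castSucc) (σ i.succ.castSucc) with hQ
    have hIH' : π (σ (Fin.last k).castSucc) * P = π (σ 0) * Q := by
      rw [hP, hQ]
      convert hIH using 3
    linear_combination P * hswap + A (σ (Fin.last k).castSucc) (σ (Fin.last (k + 1))) * hIH'

private lemma pmu_rev (hrev : ∀ i j, π i * A i j = π j * A j i) (k : ℕ)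
    (ω : Fin (k + 1) → Fin n) :
    pmu n π A k (fun i => ω i.rev) = pmu n π A k ω := by
  unfold pmu
  simp only [Fin.rev_castSucc, Fin.rev_succ, Fin.rev_zero]
  have h : ∏ i : Fin k, A (ω i.rev.succ) (ω i.rev.castSucc)
      = ∏ i : Fin k, A (ω i.succ) (ω i.castSucc) :=
    Fintype.prod_equiv Fin.revPerm _ _ (fun i => by simp)
  rw [h]
  exact rev_prod hrev k ω

private lemma pexp_rev (hrev : ∀ i j, π i * A i j = π j * A j i) (k : ℕ)
    (g : (Fin (k + 1) → Fin n) → ℝ) :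
    pexp n π A k (fun ω => g (fun i => ω i.rev)) = pexp n π A k g := by
  unfold pexp
  refine Fintype.sum_equiv ⟨fun ω i => ω i.rev, fun ω i => ω i.rev, ?_, ?_⟩ _ _ ?_
  · intro ω; funext i; simp
  · intro ω; funext i; simp
  · intro ω
    simp only [Equiv.coe_fn_mk]
    rw [pmu_rev hrev]

private lemma pexp_nonneg (hπ0 : ∀ i, 0 ≤ π i) (hA0 : ∀ i j, 0 ≤ A i j) (k : ℕ)
    {g : (Fin (k + 1) → Fin n) → ℝ} (hg : ∀ ω, 0 ≤ g ω) : 0 ≤ pexp n π A k g :=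
  sum_nonneg fun ω _ => mul_nonneg (pmu_nonneg hπ0 hA0 k ω) (hg ω)

private def mart (n : ℕ) (A : Matrix (Fin n) (Fin n) ℝ) (f : Fin n → ℝ) (k : ℕ)
    (ω : Fin (k + 1) → Fin n) : ℝ :=
  ∑ i : Fin k, (f (ω i.succ) - ∑ j, A (ω i.castSucc) j * f j)

private lemma mart_succ (f : Fin n → ℝ) (k : ℕ) (ω : Fin (k + 2) → Fin n) :
    mart n A f (k + 1) ω = mart n A f k (Fin.init ω)
      + (f (ω (Fin.last (k + 1))) - ∑ j, A (ω (Fin.last k).castSucc) j * f j) := by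
  unfold mart
  rw [Fin.sum_univ_castSucc (f := fun i : Fin (k + 1) =>
    f (ω i.succ) - ∑ j, A (ω i.castSucc) j * f j)]
  simp only [Fin.succ_castSucc, Fin.succ_last, Fin.init]

private lemma pexp_orth (k : ℕ) (hA1 : ∀ i, ∑ j, A i j = 1) (f : Fin n → ℝ)
    (h : (Fin (k + 1) → Fin n) → ℝ) :
    pexp n π A (k + 1) (fun ω => h (Fin.init ω)
      * (f (ω (Fin.last (k + 1))) - ∑ j, A (ω (Fin.last k).castSucc) j * f j)) = 0 := by
  rw [pexp_succ]
  have heq : (fun σ : Fin (k + 1) → Fin n => ∑ j, A (σ (Fin.last k)) j *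
      (h (Fin.init (Fin.snoc σ j : Fin (k + 2) → Fin n)) * (f ((Fin.snoc σ j : Fin (k + 2) → Fin n) (Fin.last (k + 1)))
        - ∑ m, A ((Fin.snoc σ j : Fin (k + 2) → Fin n) (Fin.last k).castSucc) m * f m)))
      = fun _ => (0:ℝ) := by
    funext σ
    simp only [Fin.init_snoc, Fin.snoc_last, Fin.snoc_castSucc]
    have hc : ∀ j, A (σ (Fin.last k)) j * (h σ * (f j - ∑ m, A (σ (Fin.last k)) m * f m))
        = h σ * (A (σ (Fin.last k)) j * f j)
          - h σ * (A (σ (Fin.last k)) j * (∑ m, A (σ (Fin.last k)) m * f m)) := fun j => by ring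
    rw [sum_congr rfl fun j _ => hc j, Finset.sum_sub_distrib, ← Finset.mul_sum, ← Finset.mul_sum,
      ← Finset.sum_mul, hA1 (σ (Fin.last k)), one_mul, sub_self]
  rw [heq]
  unfold pexp
  simp

private lemma mart_bound (hπ0 : ∀ i, 0 ≤ π i) (hA0 : ∀ i j, 0 ≤ A i j)
    (hA1 : ∀ i, ∑ j, A i j = 1) (hstat : ∀ j, ∑ i, π i * A i j = π j)
    (f : Fin n → ℝ) {p : ℝ} (hp : 2 < p) :
    ∀ k : ℕ, pexp n π A k (fun ω => ((mart n A f k ω) ^ 2) ^ (p / 2))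
      ≤ ((p - 1) * k *
          ((∑ i, ∑ j, π i * A i j * ((f j - ∑ m, A i m * f m) ^ 2) ^ (p / 2)) ^ (2 / p)))
        ^ (p / 2) := by
  have hp0 : (0:ℝ) < p := by linarith
  set Dp := ∑ i, ∑ j, π i * A i j * ((f j - ∑ m, A i m * f m) ^ 2) ^ (p / 2) with hDp
  have hDp0 : 0 ≤ Dp := sum_nonneg fun i _ => sum_nonneg fun j _ =>
    mul_nonneg (mul_nonneg (hπ0 i) (hA0 i j)) (Real.rpow_nonneg (sq_nonneg _) _)
  set D2 := Dp ^ (2 / p) with hD2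
  have hD20 : 0 ≤ D2 := Real.rpow_nonneg hDp0 _
  intro k
  induction k with
  | zero =>
    have h1 : (fun ω : Fin 1 → Fin n => ((mart n A f 0 ω) ^ 2) ^ (p / 2)) = fun _ => 0 := by
      funext ω
      rw [show mart n A f 0 ω = 0 by simp [mart]]
      rw [show ((0:ℝ) ^ 2) = 0 by norm_num]
      exact Real.zero_rpow (by positivity)
    rw [h1]
    have h2 : pexp n π A 0 (fun _ => (0:ℝ)) = 0 := by unfold pexp; simp
    rw [h2, show ((p - 1) * ((0:ℕ):ℝ) * D2) = 0 by simp, Real.zero_rpow (by positivity)]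
  | succ k ih =>
    have hw : ∀ ω : Fin (k + 2) → Fin n, 0 ≤ pmu n π A (k + 1) ω := pmu_nonneg hπ0 hA0 (k + 1)
    have horth : ∑ ω : Fin (k + 2) → Fin n, pmu n π A (k + 1) ω *
        (((mart n A f k (Fin.init ω)) ^ 2) ^ ((p - 2) / 2) * mart n A f k (Fin.init ω) *
          (f (ω (Fin.last (k + 1))) - ∑ j, A (ω (Fin.last k).castSucc) j * f j)) = 0 := by
      have h := pexp_orth (π := π) k hA1 f
        (fun σ => ((mart n A f k σ) ^ 2) ^ ((p - 2) / 2) * mart n A f k σ)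
      unfold pexp at h
      exact h
    have key := lp_smooth (pmu n π A (k + 1))
      (fun ω => mart n A f k (Fin.init ω))
      (fun ω => f (ω (Fin.last (k + 1))) - ∑ j, A (ω (Fin.last k).castSucc) j * f j)
      hw hp horth
    have hAeq : ∑ ω : Fin (k + 2) → Fin n, pmu n π A (k + 1) ω *
        ((mart n A f k (Fin.init ω)
          + (f (ω (Fin.last (k + 1))) - ∑ j, A (ω (Fin.last k).castSucc) j * f j)) ^ 2) ^ (p / 2)
        = pexp n π A (k + 1) (fun ω => ((mart n A f (k + 1) ω) ^ 2) ^ (p / 2)) := by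
      unfold pexp
      exact sum_congr rfl fun ω _ => by rw [← mart_succ]
    have hBeq : ∑ ω : Fin (k + 2) → Fin n, pmu n π A (k + 1) ω *
        ((mart n A f k (Fin.init ω)) ^ 2) ^ (p / 2)
        = pexp n π A k (fun σ => ((mart n A f k σ) ^ 2) ^ (p / 2)) := by
      have h := pexp_init (π := π) k hA1 (fun σ => ((mart n A f k σ) ^ 2) ^ (p / 2))
      unfold pexp at h
      exact h
    have hCeq : ∑ ω : Fin (k + 2) → Fin n, pmu n π A (k + 1) ω *
        ((f (ω (Fin.last (k + 1))) - ∑ j, A (ω (Fin.last k).castSucc) j * f j) ^ 2) ^ (p / 2)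
        = Dp := by
      have h := pexp_toppair (π := π) k hstat (fun i j => ((f j - ∑ m, A i m * f m) ^ 2) ^ (p / 2))
      unfold pexp at h
      exact h
    rw [hAeq, hBeq, hCeq] at key
    have hXk0 : 0 ≤ pexp n π A k (fun σ => ((mart n A f k σ) ^ 2) ^ (p / 2)) :=
      pexp_nonneg hπ0 hA0 k fun ω => Real.rpow_nonneg (sq_nonneg _) _
    have hmulnn : 0 ≤ (p - 1) * (k:ℝ) * D2 :=
      mul_nonneg (mul_nonneg (by linarith) (Nat.cast_nonneg k)) hD20
    have h2 : (pexp n π A k (fun σ => ((mart n A f k σ) ^ 2) ^ (p / 2))) ^ (2 / p)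
        ≤ (p - 1) * (k:ℝ) * D2 := by
      have h3 := Real.rpow_le_rpow hXk0 (ih) (by positivity : (0:ℝ) ≤ 2 / p)
      rwa [← Real.rpow_mul hmulnn, show p / 2 * (2 / p) = 1 by field_simp, Real.rpow_one] at h3
    have h4 : (pexp n π A (k + 1) (fun ω => ((mart n A f (k + 1) ω) ^ 2) ^ (p / 2))) ^ (2 / p)
        ≤ (p - 1) * ((k:ℕ) + 1 : ℝ) * D2 := by
      calc (pexp n π A (k + 1) (fun ω => ((mart n A f (k + 1) ω) ^ 2) ^ (p / 2))) ^ (2 / p)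
          ≤ (pexp n π A k (fun σ => ((mart n A f k σ) ^ 2) ^ (p / 2))) ^ (2 / p)
            + (p - 1) * Dp ^ (2 / p) := key
        _ ≤ (p - 1) * (k:ℝ) * D2 + (p - 1) * D2 := by
            rw [← hD2]; exact add_le_add_left h2 _
        _ = (p - 1) * ((k:ℕ) + 1 : ℝ) * D2 := by ring
    have hX1 : 0 ≤ pexp n π A (k + 1) (fun ω => ((mart n A f (k + 1) ω) ^ 2) ^ (p / 2)) :=
      pexp_nonneg hπ0 hA0 (k + 1) fun ω => Real.rpow_nonneg (sq_nonneg _) _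
    have h5 := Real.rpow_le_rpow (Real.rpow_nonneg hX1 _) h4 (by positivity : (0:ℝ) ≤ p / 2)
    rw [← Real.rpow_mul hX1, show 2 / p * (p / 2) = 1 by field_simp, Real.rpow_one] at h5
    rw [Nat.cast_succ]
    exact h5

private lemma fin_telescope : ∀ (t : ℕ) (G : Fin (t + 1) → ℝ),
    ∑ i : Fin t, (G i.succ - G i.castSucc) = G (Fin.last t) - G 0 := by
  intro t
  induction t with
  | zero =>
    intro G
    rw [show Fin.last 0 = (0 : Fin 1) from rfl]
    simp
  | succ t ih =>
    intro G
    rw [Fin.sum_univ_castSucc (f := fun i : Fin (t + 1) => G i.succ - G i.castSucc)]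
    simp only [Fin.succ_castSucc, Fin.succ_last]
    have h := ih (fun j => G j.castSucc)
    simp only [Fin.castSucc_zero] at h
    rw [h]
    ring

private lemma mart_rev (f : Fin n → ℝ) (t : ℕ) (ω : Fin (t + 1) → Fin n) :
    mart n A f t (fun i => ω i.rev)
      = ∑ i : Fin t, (f (ω i.castSucc) - ∑ j, A (ω i.succ) j * f j) := by
  unfold mart
  simp only [Fin.rev_succ, Fin.rev_castSucc]
  exact Fintype.sum_equiv Fin.revPerm _ _ (fun i => by simp)

private lemma mart_decomp (f : Fin n → ℝ) (t : ℕ) (ω : Fin (t + 1) → Fin n) :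
    2 * (f (ω (Fin.last t)) - f (ω 0))
      = mart n A f t ω - mart n A f t (fun i => ω i.rev)
        + ((∑ j, A (ω 0) j * f j) - f (ω 0))
        - ((∑ j, A (ω (Fin.last t)) j * f j) - f (ω (Fin.last t))) := by
  rw [mart_rev]
  unfold mart
  rw [← Finset.sum_sub_distrib]
  have h : ∀ i : Fin t, ((f (ω i.succ) - ∑ j, A (ω i.castSucc) j * f j)
      - (f (ω i.castSucc) - ∑ j, A (ω i.succ) j * f j))
      = ((fun x : Fin (t + 1) => f (ω x)) i.succ - (fun x : Fin (t + 1) => f (ω x)) i.castSucc)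
        + ((fun x : Fin (t + 1) => ∑ j, A (ω x) j * f j) i.succ
            - (fun x : Fin (t + 1) => ∑ j, A (ω x) j * f j) i.castSucc) := fun i => by ring
  rw [sum_congr rfl fun i _ => h i, Finset.sum_add_distrib,
    fin_telescope t (fun x => f (ω x)), fin_telescope t (fun x => ∑ j, A (ω x) j * f j)]
  ring


end PathSpace

private lemma wLp_add {ι : Type*} [Fintype ι] (w a b : ι → ℝ) (hw : ∀ i, 0 ≤ w i)
    {p : ℝ} (hp1 : 1 ≤ p) :
    (∑ i, w i * |a i + b i| ^ p) ^ (1 / p) ≤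
      (∑ i, w i * |a i| ^ p) ^ (1 / p) + (∑ i, w i * |b i| ^ p) ^ (1 / p) := by
  have hp0 : (0:ℝ) < p := by linarith
  have key : ∀ (c x : ℝ), 0 ≤ c → |c ^ (1 / p) * x| ^ p = c * |x| ^ p := by
    intro c x hc
    rw [abs_mul, abs_of_nonneg (Real.rpow_nonneg hc _),
      Real.mul_rpow (Real.rpow_nonneg hc _) (abs_nonneg _),
      ← Real.rpow_mul hc, show 1 / p * p = 1 by field_simp, Real.rpow_one]
  have h := Real.Lp_add_le univ (fun i => w i ^ (1 / p) * a i) (fun i => w i ^ (1 / p) * b i) hp1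
  have e1 : (∑ i, w i * |a i + b i| ^ p) ^ (1 / p)
      = (∑ i, |w i ^ (1 / p) * a i + w i ^ (1 / p) * b i| ^ p) ^ (1 / p) := by
    refine congrArg (· ^ (1 / p)) (sum_congr rfl fun i _ => ?_)
    rw [show w i ^ (1 / p) * a i + w i ^ (1 / p) * b i = w i ^ (1 / p) * (a i + b i) by ring,
      key (w i) (a i + b i) (hw i)]
  rw [e1]
  refine h.trans ?_
  have e2 : (∑ i, |w i ^ (1 / p) * a i| ^ p) ^ (1 / p) = (∑ i, w i * |a i| ^ p) ^ (1 / p) :=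
    congrArg (· ^ (1 / p)) (sum_congr rfl fun i _ => key (w i) (a i) (hw i))
  have e3 : (∑ i, |w i ^ (1 / p) * b i| ^ p) ^ (1 / p) = (∑ i, w i * |b i| ^ p) ^ (1 / p) :=
    congrArg (· ^ (1 / p)) (sum_congr rfl fun i _ => key (w i) (b i) (hw i))
  rw [e2, e3]

private lemma wLp_smul {ι : Type*} [Fintype ι] (w a : ι → ℝ) (hw : ∀ i, 0 ≤ w i) (c : ℝ)
    {p : ℝ} (hp0 : 0 < p) :
    (∑ i, w i * |c * a i| ^ p) ^ (1 / p) = |c| * (∑ i, w i * |a i| ^ p) ^ (1 / p) := by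
  have e1 : ∀ i : ι, w i * |c * a i| ^ p = |c| ^ p * (w i * |a i| ^ p) := by
    intro i
    rw [abs_mul, Real.mul_rpow (abs_nonneg c) (abs_nonneg (a i))]
    ring
  rw [sum_congr rfl fun i _ => e1 i, ← mul_sum,
    Real.mul_rpow (Real.rpow_nonneg (abs_nonneg c) p)
      (sum_nonneg fun i _ => mul_nonneg (hw i) (Real.rpow_nonneg (abs_nonneg _) _)),
    ← Real.rpow_mul (abs_nonneg c), show p * (1 / p) = 1 by field_simp, Real.rpow_one]

set_option maxHeartbeats 1000000 in
/-- For a stationary reversible finite Markov chain `{Z_t}` on `{1,…,n}` and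
`f : {1,…,n} → ℝ`, for every `p ∈ (2,∞)` and `t ≥ 1`,
`(E|f(Z_t) - f(Z_0)|^p)^{1/p} ≤ 16 √(pt) (E|f(Z_1) - f(Z_0)|^p)^{1/p}`. -/
theorem real_markov_pth_moment
    (n : ℕ) (π : Fin n → ℝ) (A : Matrix (Fin n) (Fin n) ℝ)
    (hπ0 : ∀ i, 0 ≤ π i) (hπ1 : ∑ i, π i = 1)
    (hA0 : ∀ i j, 0 ≤ A i j) (hA1 : ∀ i, ∑ j, A i j = 1)
    (hstat : ∀ j, ∑ i, π i * A i j = π j)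
    (hrev : ∀ i j, π i * A i j = π j * A j i)
    (f : Fin n → ℝ) (p : ℝ) (hp : 2 < p) (t : ℕ) (ht : 1 ≤ t) :
    (∑ i, ∑ j, π i * (A ^ t) i j * |f i - f j| ^ p) ^ (1 / p) ≤
      16 * Real.sqrt (p * t) *
        (∑ i, ∑ j, π i * A i j * |f i - f j| ^ p) ^ (1 / p) := by
  have hp0 : (0:ℝ) < p := by linarith
  have hp1 : (1:ℝ) ≤ p := by linarith
  have ht1 : (1:ℝ) ≤ (t:ℝ) := by exact_mod_cast ht
  have absf : ∀ x : ℝ, |x| ^ p = (x ^ 2) ^ (p / 2) := by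
    intro x
    rw [← sq_abs x, ← Real.rpow_natCast |x| 2, ← Real.rpow_mul (abs_nonneg x)]
    congr 1
    push_cast
    ring
  set S := ∑ i, ∑ j, π i * A i j * |f i - f j| ^ p with hSdef
  have hS0 : 0 ≤ S := sum_nonneg fun i _ => sum_nonneg fun j _ =>
    mul_nonneg (mul_nonneg (hπ0 i) (hA0 i j)) (Real.rpow_nonneg (abs_nonneg _) _)
  set M1 := S ^ (1 / p) with hM1def
  have hM10 : 0 ≤ M1 := Real.rpow_nonneg hS0 _
  -- Jensen bound for the drift term
  have hJen : (∑ i, π i * |(∑ j, A i j * f j) - f i| ^ p) ≤ S := by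
    have hper : ∀ i, |(∑ j, A i j * f j) - f i| ^ p ≤ ∑ j, A i j * |f j - f i| ^ p := by
      intro i
      have e1 : (∑ j, A i j * f j) - f i = ∑ j, A i j * (f j - f i) := by
        rw [sum_congr rfl fun j _ => (mul_sub (A i j) (f j) (f i)), Finset.sum_sub_distrib,
          ← Finset.sum_mul, hA1 i, one_mul]
      have habs : |(∑ j, A i j * f j) - f i| ≤ ∑ j, A i j * |f j - f i| := by
        rw [e1]
        refine (Finset.abs_sum_le_sum_abs _ _).trans (le_of_eq ?_)
        exact sum_congr rfl fun j _ => by rw [abs_mul, abs_of_nonneg (hA0 i j)]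
      calc |(∑ j, A i j * f j) - f i| ^ p ≤ (∑ j, A i j * |f j - f i|) ^ p :=
            Real.rpow_le_rpow (abs_nonneg _) habs hp0.le
        _ ≤ ∑ j, A i j * |f j - f i| ^ p :=
            Real.rpow_arith_mean_le_arith_mean_rpow univ _ _ (fun j _ => hA0 i j) (hA1 i)
              (fun j _ => abs_nonneg _) hp1
    calc ∑ i, π i * |(∑ j, A i j * f j) - f i| ^ p
        ≤ ∑ i, π i * ∑ j, A i j * |f j - f i| ^ p :=
          sum_le_sum fun i _ => mul_le_mul_of_nonneg_left (hper i) (hπ0 i)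
      _ = S := by
          rw [hSdef]
          refine sum_congr rfl fun i _ => ?_
          rw [mul_sum]
          exact sum_congr rfl fun j _ => by rw [abs_sub_comm]; ring
  have hdrift0 : 0 ≤ ∑ i, π i * |(∑ j, A i j * f j) - f i| ^ p :=
    sum_nonneg fun i _ => mul_nonneg (hπ0 i) (Real.rpow_nonneg (abs_nonneg _) _)
  have hNc : (∑ i, π i * |(∑ j, A i j * f j) - f i| ^ p) ^ (1 / p) ≤ M1 := by
    rw [hM1def]
    exact Real.rpow_le_rpow hdrift0 hJen (by positivity)
  -- increment bound
  set Dp := ∑ i, ∑ j, π i * A i j * ((f j - ∑ m, A i m * f m) ^ 2) ^ (p / 2) with hDpdef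
  have hDp0 : 0 ≤ Dp := sum_nonneg fun i _ => sum_nonneg fun j _ =>
    mul_nonneg (mul_nonneg (hπ0 i) (hA0 i j)) (Real.rpow_nonneg (sq_nonneg _) _)
  have hDble : Dp ^ (1 / p) ≤ 2 * M1 := by
    have hw : ∀ x : Fin n × Fin n, 0 ≤ π x.1 * A x.1 x.2 := fun x =>
      mul_nonneg (hπ0 _) (hA0 _ _)
    have hmink := wLp_add (fun x : Fin n × Fin n => π x.1 * A x.1 x.2)
      (fun x => f x.2 - f x.1) (fun x => f x.1 - ∑ m, A x.1 m * f m) hw hp1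
    have e1 : (∑ x : Fin n × Fin n, π x.1 * A x.1 x.2 *
        |(f x.2 - f x.1) + (f x.1 - ∑ m, A x.1 m * f m)| ^ p) = Dp := by
      calc (∑ x : Fin n × Fin n, π x.1 * A x.1 x.2 *
          |(f x.2 - f x.1) + (f x.1 - ∑ m, A x.1 m * f m)| ^ p)
          = ∑ i, ∑ j, π i * A i j * |(f j - f i) + (f i - ∑ m, A i m * f m)| ^ p :=
            Fintype.sum_prod_type _
        _ = Dp := by
            rw [hDpdef]
            refine sum_congr rfl fun i _ => sum_congr rfl fun j _ => ?_
            rw [show (f j - f i) + (f i - ∑ m, A i m * f m) = f j - ∑ m, A i m * f m by ring,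
              absf]
    have e2 : (∑ x : Fin n × Fin n, π x.1 * A x.1 x.2 * |f x.2 - f x.1| ^ p) = S := by
      calc (∑ x : Fin n × Fin n, π x.1 * A x.1 x.2 * |f x.2 - f x.1| ^ p)
          = ∑ i, ∑ j, π i * A i j * |f j - f i| ^ p := Fintype.sum_prod_type _
        _ = S := by
            rw [hSdef]
            exact sum_congr rfl fun i _ => sum_congr rfl fun j _ => by rw [abs_sub_comm]
    have e3 : (∑ x : Fin n × Fin n, π x.1 * A x.1 x.2 * |f x.1 - ∑ m, A x.1 m * f m| ^ p)
        = ∑ i, π i * |(∑ j, A i j * f j) - f i| ^ p := by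
      calc (∑ x : Fin n × Fin n, π x.1 * A x.1 x.2 * |f x.1 - ∑ m, A x.1 m * f m| ^ p)
          = ∑ i, ∑ j, π i * A i j * |f i - ∑ m, A i m * f m| ^ p := Fintype.sum_prod_type _
        _ = ∑ i, π i * |(∑ j, A i j * f j) - f i| ^ p := by
            refine sum_congr rfl fun i _ => ?_
            rw [show |f i - ∑ m, A i m * f m| = |(∑ j, A i j * f j) - f i| from abs_sub_comm _ _]
            calc ∑ j, π i * A i j * |(∑ j', A i j' * f j') - f i| ^ p
                = ∑ j, A i j * (π i * |(∑ j', A i j' * f j') - f i| ^ p) :=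
                  sum_congr rfl fun j _ => by ring
              _ = (∑ j, A i j) * (π i * |(∑ j', A i j' * f j') - f i| ^ p) :=
                  (Finset.sum_mul _ _ _).symm
              _ = π i * |(∑ j', A i j' * f j') - f i| ^ p := by rw [hA1 i, one_mul]
    rw [e1, e2, e3, ← hM1def] at hmink
    have hx : (∑ i, π i * |(∑ j, A i j * f j) - f i| ^ p) ^ (1 / p) ≤ M1 := hNc
    linarith
  -- martingale bound
  have hMB := mart_bound hπ0 hA0 hA1 hstat f hp t
  have hwt : ∀ ω : Fin (t + 1) → Fin n, 0 ≤ pmu n π A t ω := pmu_nonneg hπ0 hA0 t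
  have hNa : (pexp n π A t (fun ω => |mart n A f t ω| ^ p)) ^ (1 / p)
      ≤ 2 * M1 * Real.sqrt (p * t) := by
    have e1 : (fun ω : Fin (t + 1) → Fin n => |mart n A f t ω| ^ p)
        = fun ω => ((mart n A f t ω) ^ 2) ^ (p / 2) := funext fun ω => absf _
    rw [e1]
    have hbase0 : 0 ≤ (p - 1) * (t:ℝ) * Dp ^ (2 / p) :=
      mul_nonneg (mul_nonneg (by linarith) (by positivity)) (Real.rpow_nonneg hDp0 _)
    have h1 := Real.rpow_le_rpow
      (pexp_nonneg hπ0 hA0 t fun ω => Real.rpow_nonneg (sq_nonneg _) _) (hMB)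
      (by positivity : (0:ℝ) ≤ 1 / p)
    rw [← Real.rpow_mul hbase0, show p / 2 * (1 / p) = 1 / 2 by field_simp] at h1
    have pow2 : ∀ x : ℝ, x ^ (2:ℝ) = x ^ (2:ℕ) := fun x => by
      rw [← Real.rpow_natCast x 2]; norm_num
    have hD2le : Dp ^ (2 / p) ≤ 4 * M1 ^ 2 := by
      have h3 := Real.rpow_le_rpow (Real.rpow_nonneg hDp0 _) hDble (by norm_num : (0:ℝ) ≤ 2)
      rw [pow2, pow2] at h3
      have h4 : (Dp ^ (1 / p)) ^ (2:ℕ) = Dp ^ (2 / p) := by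
        rw [← Real.rpow_natCast (Dp ^ (1 / p)) 2, ← Real.rpow_mul hDp0,
          show 1 / p * ((2:ℕ):ℝ) = 2 / p by push_cast; ring]
      rw [h4] at h3
      nlinarith [h3]
    have h2 : ((p - 1) * (t:ℝ) * Dp ^ (2 / p)) ^ ((1:ℝ) / 2)
        ≤ Real.sqrt (p * (t:ℝ) * (4 * M1 ^ 2)) := by
      rw [← Real.sqrt_eq_rpow]
      apply Real.sqrt_le_sqrt
      have hD2nn : 0 ≤ Dp ^ (2 / p) := Real.rpow_nonneg hDp0 _
      have c1 : 0 ≤ (p - 1) * (t:ℝ) := mul_nonneg (by linarith) (by positivity)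
      have c2 := mul_le_mul_of_nonneg_left hD2le c1
      have c3 : (p - 1) * (t:ℝ) * (4 * M1 ^ 2) ≤ p * (t:ℝ) * (4 * M1 ^ 2) := by
        nlinarith [sq_nonneg M1, ht1]
      calc (p - 1) * (t:ℝ) * Dp ^ (2 / p) = (p - 1) * (t:ℝ) * Dp ^ (2 / p) := rfl
        _ ≤ (p - 1) * (t:ℝ) * (4 * M1 ^ 2) := by nlinarith [c2]
        _ ≤ p * (t:ℝ) * (4 * M1 ^ 2) := c3
    have h4 : Real.sqrt (p * (t:ℝ) * (4 * M1 ^ 2)) = 2 * M1 * Real.sqrt (p * t) := by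
      rw [Real.sqrt_mul (by positivity : (0:ℝ) ≤ p * (t:ℝ)),
        show (4 * M1 ^ 2) = (2 * M1) ^ 2 by ring, Real.sqrt_sq (by linarith : (0:ℝ) ≤ 2 * M1)]
      ring
    calc (pexp n π A t fun ω => ((mart n A f t ω) ^ 2) ^ (p / 2)) ^ (1 / p)
        ≤ ((p - 1) * (t:ℝ) * Dp ^ (2 / p)) ^ ((1:ℝ) / 2) := h1
      _ ≤ Real.sqrt (p * (t:ℝ) * (4 * M1 ^ 2)) := h2
      _ = 2 * M1 * Real.sqrt (p * t) := h4
  -- norms of the boundary terms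
  have hbzero : pexp n π A t (fun ω => |(∑ j, A (ω 0) j * f j) - f (ω 0)| ^ p)
      = ∑ i, π i * |(∑ j, A i j * f j) - f i| ^ p :=
    pexp_eval_zero t hA1 (fun i => |(∑ j, A i j * f j) - f i| ^ p)
  have hblast : pexp n π A t
        (fun ω => |(∑ j, A (ω (Fin.last t)) j * f j) - f (ω (Fin.last t))| ^ p)
      = ∑ i, π i * |(∑ j, A i j * f j) - f i| ^ p :=
    pexp_eval_last t hstat (fun i => |(∑ j, A i j * f j) - f i| ^ p)
  have hrevmart : pexp n π A t (fun ω => |mart n A f t (fun i => ω i.rev)| ^ p)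
      = pexp n π A t (fun ω => |mart n A f t ω| ^ p) :=
    pexp_rev hrev t (fun ω => |mart n A f t ω| ^ p)
  -- decomposition + Minkowski
  have hdecfun : (fun ω : Fin (t + 1) → Fin n => |f (ω (Fin.last t)) - f (ω 0)| ^ p)
      = fun ω => |(1/2 : ℝ) * mart n A f t ω
          + ((-(1/2) : ℝ) * mart n A f t (fun i => ω i.rev)
            + ((1/2 : ℝ) * ((∑ j, A (ω 0) j * f j) - f (ω 0))
              + (-(1/2) : ℝ) * ((∑ j, A (ω (Fin.last t)) j * f j) - f (ω (Fin.last t)))))| ^ p := by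
    funext ω
    congr 1
    congr 1
    linear_combination (1/2 : ℝ) * mart_decomp (A := A) f t ω
  have hNm : 0 ≤ (pexp n π A t (fun ω => |mart n A f t ω| ^ p)) ^ (1 / p) :=
    Real.rpow_nonneg (pexp_nonneg hπ0 hA0 t fun ω => Real.rpow_nonneg (abs_nonneg _) _) _
  have hchain : (pexp n π A t (fun ω => |f (ω (Fin.last t)) - f (ω 0)| ^ p)) ^ (1 / p)
      ≤ 2 * M1 * Real.sqrt (p * t) + M1 := by
    have step1 :
        (pexp n π A t (fun ω => |f (ω (Fin.last t)) - f (ω 0)| ^ p)) ^ (1 / p)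
        ≤ (∑ ω : Fin (t + 1) → Fin n, pmu n π A t ω
              * |(1/2 : ℝ) * mart n A f t ω| ^ p) ^ (1 / p)
          + ((∑ ω : Fin (t + 1) → Fin n, pmu n π A t ω
              * |(-(1/2) : ℝ) * mart n A f t (fun i => ω i.rev)| ^ p) ^ (1 / p)
            + ((∑ ω : Fin (t + 1) → Fin n, pmu n π A t ω
                * |(1/2 : ℝ) * ((∑ j, A (ω 0) j * f j) - f (ω 0))| ^ p) ^ (1 / p)
              + (∑ ω : Fin (t + 1) → Fin n, pmu n π A t ω
                * |(-(1/2) : ℝ) * ((∑ j, A (ω (Fin.last t)) j * f j)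
                    - f (ω (Fin.last t)))| ^ p) ^ (1 / p))) := by
      rw [hdecfun]
      refine le_trans (wLp_add (pmu n π A t) _ _ hwt hp1) ?_
      refine add_le_add_right ?_ _
      refine le_trans (wLp_add (pmu n π A t) _ _ hwt hp1) ?_
      refine add_le_add_right ?_ _
      exact wLp_add (pmu n π A t) _ _ hwt hp1
    rw [wLp_smul (pmu n π A t) _ hwt _ hp0, wLp_smul (pmu n π A t) _ hwt _ hp0,
      wLp_smul (pmu n π A t) _ hwt _ hp0, wLp_smul (pmu n π A t) _ hwt _ hp0] at step1
    rw [show |(1/2 : ℝ)| = 1/2 by norm_num, show |(-(1/2) : ℝ)| = 1/2 by norm_num] at step1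
    have e5 : (∑ ω : Fin (t + 1) → Fin n, pmu n π A t ω * |mart n A f t ω| ^ p) ^ (1 / p)
        = (pexp n π A t (fun ω => |mart n A f t ω| ^ p)) ^ (1 / p) := rfl
    have e6 : (∑ ω : Fin (t + 1) → Fin n, pmu n π A t ω
          * |mart n A f t (fun i => ω i.rev)| ^ p) ^ (1 / p)
        = (pexp n π A t (fun ω => |mart n A f t ω| ^ p)) ^ (1 / p) := by
      rw [show (∑ ω : Fin (t + 1) → Fin n, pmu n π A t ω
          * |mart n A f t (fun i => ω i.rev)| ^ p)
        = pexp n π A t (fun ω => |mart n A f t (fun i => ω i.rev)| ^ p) from rfl, hrevmart]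
    have e7 : (∑ ω : Fin (t + 1) → Fin n, pmu n π A t ω
          * |(∑ j, A (ω 0) j * f j) - f (ω 0)| ^ p) ^ (1 / p)
        = (∑ i, π i * |(∑ j, A i j * f j) - f i| ^ p) ^ (1 / p) := by
      rw [show (∑ ω : Fin (t + 1) → Fin n, pmu n π A t ω
          * |(∑ j, A (ω 0) j * f j) - f (ω 0)| ^ p)
        = pexp n π A t (fun ω => |(∑ j, A (ω 0) j * f j) - f (ω 0)| ^ p) from rfl, hbzero]
    have e8 : (∑ ω : Fin (t + 1) → Fin n, pmu n π A t ω
          * |(∑ j, A (ω (Fin.last t)) j * f j) - f (ω (Fin.last t))| ^ p) ^ (1 / p)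
        = (∑ i, π i * |(∑ j, A i j * f j) - f i| ^ p) ^ (1 / p) := by
      rw [show (∑ ω : Fin (t + 1) → Fin n, pmu n π A t ω
          * |(∑ j, A (ω (Fin.last t)) j * f j) - f (ω (Fin.last t))| ^ p)
        = pexp n π A t
            (fun ω => |(∑ j, A (ω (Fin.last t)) j * f j) - f (ω (Fin.last t))| ^ p) from rfl,
        hblast]
    rw [e5, e6, e7, e8] at step1
    have hNaval := hNa
    have hNcval := hNc
    linarith
  -- conclusion
  have hgoal_eq : (∑ i, ∑ j, π i * (A ^ t) i j * |f i - f j| ^ p)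
      = pexp n π A t (fun ω => |f (ω (Fin.last t)) - f (ω 0)| ^ p) := by
    have e : pexp n π A t (fun ω => |f (ω (Fin.last t)) - f (ω 0)| ^ p)
        = ∑ i, ∑ j, π i * (A ^ t) i j * |f j - f i| ^ p :=
      pexp_zero_last t (fun i j => |f j - f i| ^ p)
    rw [e]
    exact sum_congr rfl fun i _ => sum_congr rfl fun j _ => by rw [abs_sub_comm]
  calc (∑ i, ∑ j, π i * (A ^ t) i j * |f i - f j| ^ p) ^ (1 / p)
      = (pexp n π A t (fun ω => |f (ω (Fin.last t)) - f (ω 0)| ^ p)) ^ (1 / p) := by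
        rw [hgoal_eq]
    _ ≤ 2 * M1 * Real.sqrt (p * t) + M1 := hchain
    _ ≤ 16 * Real.sqrt (p * t) * M1 := by
        have hs1 : (1:ℝ) ≤ Real.sqrt (p * t) := by
          rw [show (1:ℝ) = Real.sqrt 1 by simp]
          exact Real.sqrt_le_sqrt (by nlinarith)
        nlinarith [mul_le_mul_of_nonneg_right hs1 hM10, Real.sqrt_nonneg (p * t), hM10]
end

section
/- Let X and Y be metric spaces and suppose X embeds weakly into Y with distortion K (for every Δ > 0 there is a 1-Lipschitz g_Δ: X → Y such that d_X(x,y) ≥ Δ implies d_Y(g_Δ(x), g_Δ(y)) ≥ Δ/K). Then the weak Markov type 2 constants satisfy M₂ʷ(X) ≤ K · M₂ʷ(Y). -/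
open Finset

/-- A metric space `X` has weak Markov type 2 with constant `C` if for every
stationary reversible finite Markov chain (stationary distribution `π`, transition
matrix `A`), every `f : {1,…,n} → X`, every time `t` and every `ζ > 0`,
`Pr(d(f(Z₀),f(Z_t))² ≥ tζ) ≤ C² ζ⁻¹ E d(f(Z₀),f(Z₁))²`. -/
def HasWeakMarkovType2 (X : Type*) [MetricSpace X] (C : ℝ) : Prop :=
  ∀ (n : ℕ) (π : Fin n → ℝ) (A : Matrix (Fin n) (Fin n) ℝ),
    (∀ i, 0 ≤ π i) → (∑ i, π i = 1) →
    (∀ i j, 0 ≤ A i j) → (∀ i, ∑ j, A i j = 1) →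
    (∀ j, ∑ i, π i * A i j = π j) →
    (∀ i j, π i * A i j = π j * A j i) →
    ∀ (f : Fin n → X) (t : ℕ), 1 ≤ t → ∀ ζ : ℝ, 0 < ζ →
      (∑ i, ∑ j, if (t : ℝ) * ζ ≤ dist (f i) (f j) ^ 2 then π i * (A ^ t) i j else 0) ≤
        C ^ 2 * ζ⁻¹ * ∑ i, ∑ j, π i * A i j * dist (f i) (f j) ^ 2

/-!
A weak embedding `g` at scale `Δ = √(tζ)` maps every pair of the chain at squared distance
`≥ tζ` to a pair at squared distance `≥ tζ / K²`, while being `1`-Lipschitz it does not increase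
the one-step energy. Applying weak Markov type 2 of `Y` to `g ∘ f` at threshold `ζ / K²` then gives
the bound for `f` with constant `K² C²`.
-/

section WeightedPairs

variable {ι X Y : Type*} [Fintype ι] [PseudoMetricSpace X] [PseudoMetricSpace Y]

/-- With `w i j = π i * (A ^ t) i j` this is `Pr(d(f Z₀, f Z_t)² ≥ s)`. -/
noncomputable def farPairMass (w : ι → ι → ℝ) (f : ι → X) (s : ℝ) : ℝ :=
  ∑ i, ∑ j, if s ≤ dist (f i) (f j) ^ 2 then w i j else 0

/-- With `w i j = π i * A i j` this is `E d(f Z₀, f Z₁)²`. -/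
def pairEnergy (w : ι → ι → ℝ) (f : ι → X) : ℝ :=
  ∑ i, ∑ j, w i j * dist (f i) (f j) ^ 2

theorem farPairMass_le_farPairMass {w : ι → ι → ℝ} (hw : ∀ i j, 0 ≤ w i j) {f : ι → X}
    {F : ι → Y} {s s' : ℝ} (h : ∀ i j, s ≤ dist (f i) (f j) ^ 2 → s' ≤ dist (F i) (F j) ^ 2) :
    farPairMass w f s ≤ farPairMass w F s' := by
  refine sum_le_sum fun i _ => sum_le_sum fun j _ => ?_
  split_ifs with hf hF hF
  · exact le_rfl
  · exact absurd (h i j hf) hF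
  · exact hw i j
  · exact le_rfl

theorem pairEnergy_comp_le {w : ι → ι → ℝ} (hw : ∀ i j, 0 ≤ w i j) {g : X → Y}
    (hg : LipschitzWith 1 g) (f : ι → X) : pairEnergy w (g ∘ f) ≤ pairEnergy w f := by
  refine sum_le_sum fun i _ => sum_le_sum fun j _ => ?_
  have hdist : dist (g (f i)) (g (f j)) ≤ dist (f i) (f j) := by
    simpa using hg.dist_le_mul (f i) (f j)
  exact mul_le_mul_of_nonneg_left (pow_le_pow_left₀ dist_nonneg hdist 2) (hw i j)

end WeightedPairs

theorem div_sq_le_dist_sq_of_sqrt_le {X Y : Type*} [PseudoMetricSpace X] [PseudoMetricSpace Y]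
    {g : X → Y} {K s : ℝ} (hK : 0 ≤ K) (hs : 0 ≤ s)
    (hg : ∀ x y : X, √s ≤ dist x y → √s / K ≤ dist (g x) (g y)) {x y : X}
    (hxy : s ≤ dist x y ^ 2) : s / K ^ 2 ≤ dist (g x) (g y) ^ 2 := by
  have hsqrt : √s ≤ dist x y := (Real.sqrt_le_left dist_nonneg).mpr hxy
  calc s / K ^ 2 = (√s / K) ^ 2 := by rw [div_pow, Real.sq_sqrt hs]
    _ ≤ dist (g x) (g y) ^ 2 := pow_le_pow_left₀ (by positivity) (hg x y hsqrt) 2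

theorem weak_markov_type_of_weak_embedding_general
    {X Y : Type*} [MetricSpace X] [MetricSpace Y] (K : ℝ) (hK : 0 < K)
    (hemb : ∀ Δ : ℝ, 0 < Δ → ∃ g : X → Y, LipschitzWith 1 g ∧
      ∀ x y : X, Δ ≤ dist x y → Δ / K ≤ dist (g x) (g y))
    (C : ℝ) (hY : HasWeakMarkovType2 Y C) :
    HasWeakMarkovType2 X (K * C) := by
  intro n π A hπ hπ1 hA hA1 hstat hrev f t ht ζ hζ
  have htζ : 0 < (t : ℝ) * ζ := mul_pos (by exact_mod_cast ht) hζ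
  obtain ⟨g, hg_lip, hg_far⟩ := hemb _ (Real.sqrt_pos.mpr htζ)
  have hwt : ∀ i j, 0 ≤ π i * (A ^ t) i j := fun i j =>
    mul_nonneg (hπ i) (Matrix.pow_apply_nonneg hA t i j)
  have hw1 : ∀ i j, 0 ≤ π i * A i j := fun i j => mul_nonneg (hπ i) (hA i j)
  change farPairMass (fun i j => π i * (A ^ t) i j) f (t * ζ) ≤
    (K * C) ^ 2 * ζ⁻¹ * pairEnergy (fun i j => π i * A i j) f
  calc farPairMass _ f (t * ζ)
      ≤ farPairMass _ (g ∘ f) (t * (ζ / K ^ 2)) := farPairMass_le_farPairMass hwt fun i j h => by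
        rw [← mul_div_assoc]
        exact div_sq_le_dist_sq_of_sqrt_le hK.le htζ.le hg_far h
    _ ≤ C ^ 2 * (ζ / K ^ 2)⁻¹ * pairEnergy _ (g ∘ f) :=
        hY n π A hπ hπ1 hA hA1 hstat hrev (g ∘ f) t ht _ (by positivity)
    _ ≤ C ^ 2 * (ζ / K ^ 2)⁻¹ * pairEnergy _ f := by
        gcongr
        exact pairEnergy_comp_le hw1 hg_lip f
    _ = (K * C) ^ 2 * ζ⁻¹ * pairEnergy _ f := by
        field_simp

/-- If `X` embeds weakly into `Y` with distortion `K` (for every `Δ > 0` there is a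
`1`-Lipschitz `g_Δ : X → Y` with `d(x,y) ≥ Δ → d(g_Δ x, g_Δ y) ≥ Δ/K`), then the
weak Markov type 2 constants satisfy `M₂ʷ(X) ≤ K · M₂ʷ(Y)`. -/
theorem weak_markov_type_of_weak_embedding
    {X Y : Type*} [MetricSpace X] [MetricSpace Y] (K : ℝ) (hK : 0 < K)
    (hemb : ∀ Δ : ℝ, 0 < Δ → ∃ g : X → Y, LipschitzWith 1 g ∧
      ∀ x y : X, Δ ≤ dist x y → Δ / K ≤ dist (g x) (g y))
    (C : ℝ) (hC : 0 ≤ C) (hY : HasWeakMarkovType2 Y C) :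
    HasWeakMarkovType2 X (K * C) :=
  weak_markov_type_of_weak_embedding_general K hK hemb C hY
end
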